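/- arXiv:1504.04670 — 6 statements merged into one kernel-verified Lean document; each statement's English description precedes it below -/
import Mathlib

section
/- Let V₁, V₂, V₃ be finite-dimensional real inner product spaces, and let d₁ : V₁ → V₂ and d₂ : V₂ → V₃ be linear maps with d₂ ∘ d₁ = 0. Let N₁ ⊆ V₁ and N₂ ⊆ V₂ be subspaces such that d₁(N₁) ⊆ N₂ and ker d₂ ∩ N₂ ⊆ d₁(N₁). Then for every u ∈ V₂ there exists a unique element w of the coset u + N₂ such that ⟨d₂ w, d₂ z⟩ = 0 for all z ∈ N₂ and ⟨w, d₁ y⟩ = 0 for all y ∈ N₁. -/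
open scoped RealInnerProductSpace

/-- Let `V₁, V₂, V₃` be finite-dimensional real inner product spaces,
`d₁ : V₁ → V₂`, `d₂ : V₂ → V₃` linear with `d₂ ∘ d₁ = 0`. Let `N₁ ⊆ V₁`, `N₂ ⊆ V₂` be
subspaces with `d₁(N₁) ⊆ N₂` and `ker d₂ ∩ N₂ ⊆ d₁(N₁)`. Then every `u ∈ V₂` has a unique
element `w` of the coset `u + N₂` with `⟪d₂ w, d₂ z⟫ = 0` for all `z ∈ N₂` and
`⟪w, d₁ y⟫ = 0` for all `y ∈ N₁`. -/
theorem stmt2 {V₁ V₂ V₃ : Type*}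
    [NormedAddCommGroup V₁] [InnerProductSpace ℝ V₁] [FiniteDimensional ℝ V₁]
    [NormedAddCommGroup V₂] [InnerProductSpace ℝ V₂] [FiniteDimensional ℝ V₂]
    [NormedAddCommGroup V₃] [InnerProductSpace ℝ V₃] [FiniteDimensional ℝ V₃]
    (d₁ : V₁ →ₗ[ℝ] V₂) (d₂ : V₂ →ₗ[ℝ] V₃) (hdd : d₂ ∘ₗ d₁ = 0)
    (N₁ : Submodule ℝ V₁) (N₂ : Submodule ℝ V₂)
    (hmap : N₁.map d₁ ≤ N₂)
    (hex : LinearMap.ker d₂ ⊓ N₂ ≤ N₁.map d₁)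
    (u : V₂) :
    ∃! w : V₂, w - u ∈ N₂ ∧ (∀ z ∈ N₂, ⟪d₂ w, d₂ z⟫ = 0) ∧ (∀ y ∈ N₁, ⟪w, d₁ y⟫ = 0) := by
  -- d₂ kills d₁(N₁)
  have hd20 : ∀ x ∈ N₁.map d₁, d₂ x = 0 := by
    rintro x ⟨y, -, rfl⟩
    have := LinearMap.congr_fun hdd y
    simpa using this
  -- Step 1: project d₂ u onto d₂(N₂)
  set W : Submodule ℝ V₃ := N₂.map d₂ with hW
  set p : V₃ := (Submodule.orthogonalProjectionOnto W (d₂ u) : V₃) with hp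
  obtain ⟨n, hnN₂, hdn⟩ : ∃ n ∈ N₂, d₂ n = p := by
    have : p ∈ W := (Submodule.orthogonalProjectionOnto W (d₂ u)).2
    exact this
  set M : Submodule ℝ V₂ := N₁.map d₁ with hM
  set w₁ : V₂ := u - n with hw₁
  set w : V₂ := w₁ - (Submodule.orthogonalProjectionOnto M w₁ : V₂) with hw
  have hprojM : (Submodule.orthogonalProjectionOnto M w₁ : V₂) ∈ M := (Submodule.orthogonalProjectionOnto M w₁).2
  have hwu : w - u ∈ N₂ := by
    have : w - u = -(n + (Submodule.orthogonalProjectionOnto M w₁ : V₂)) := by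
      simp [hw, hw₁]; abel
    rw [this]
    exact neg_mem (add_mem hnN₂ (hmap hprojM))
  have hd2w : d₂ w = d₂ u - p := by
    rw [hw, map_sub, hd20 _ hprojM, sub_zero, hw₁, map_sub, hdn]
  have horth1 : ∀ z ∈ N₂, ⟪d₂ w, d₂ z⟫ = 0 := by
    intro z hz
    rw [hd2w, real_inner_comm]
    exact Submodule.sub_starProjection_mem_orthogonal (K := W) (d₂ u) _ ⟨z, hz, rfl⟩
  have horth2 : ∀ y ∈ N₁, ⟪w, d₁ y⟫ = 0 := by
    intro y hy
    have := Submodule.sub_starProjection_mem_orthogonal (K := M) w₁ (d₁ y) ⟨y, hy, rfl⟩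
    rw [hw, real_inner_comm]
    exact this
  refine ⟨w, ⟨hwu, horth1, horth2⟩, ?_⟩
  rintro w' ⟨hw'u, h1', h2'⟩
  have hnmem : w' - w ∈ N₂ := by
    have h : w' - w = (w' - u) - (w - u) := by abel
    rw [h]; exact sub_mem hw'u hwu
  have h0 : d₂ (w' - w) = 0 := by
    have hz : ⟪d₂ (w' - w), d₂ (w' - w)⟫ = 0 := by
      calc ⟪d₂ (w' - w), d₂ (w' - w)⟫
          = ⟪d₂ w' - d₂ w, d₂ (w' - w)⟫ := by rw [map_sub]
        _ = ⟪d₂ w', d₂ (w' - w)⟫ - ⟪d₂ w, d₂ (w' - w)⟫ := inner_sub_left _ _ _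
        _ = 0 := by rw [h1' _ hnmem, horth1 _ hnmem]; ring
    exact inner_self_eq_zero.mp hz
  obtain ⟨y, hy, hdy⟩ : w' - w ∈ N₁.map d₁ := hex ⟨h0, hnmem⟩
  have hz2 : ⟪w' - w, w' - w⟫ = 0 := by
    calc ⟪w' - w, w' - w⟫ = ⟪w', w' - w⟫ - ⟪w, w' - w⟫ := inner_sub_left _ _ _
      _ = 0 := by rw [← hdy, h2' _ hy, horth2 _ hy]; ring
  have := inner_self_eq_zero.mp hz2
  exact sub_eq_zero.mp this
end

section
/- Let K be a field and let V⁻, V, V⁺ be K-vector spaces with linear maps d : V⁻ → V and d : V → V⁺ satisfying d ∘ d = 0. Let A⁻ ⊆ V⁻, A ⊆ V, A⁺ ⊆ V⁺ be subspaces with d(A⁻) ⊆ A and d(A) ⊆ A⁺. Let E⁻ ⊆ V⁻ and E ⊆ V be subspaces such that: d is injective on E⁻ and on E; d(E⁻) ⊆ A; d(E) ⊆ A⁺; d(E⁻) ∩ d(A⁻) = {0}; d(A⁻) + d(E⁻) = ker d ∩ A; and d(E) ∩ d(A) = {0}. Then (i) A ∩ E = {0}, and (ii) every u ∈ A + E with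 d u = 0 lies in d(A⁻) + d(E⁻) = d(A⁻ + E⁻); that is, the augmented complex with middle space A ⊕ E is exact at the middle degree. -/
/-- Let `K` be a field and `V⁻, V, V⁺` be `K`-vector spaces with linear maps
`dm : V⁻ → V`, `dp : V → V⁺` satisfying `dp ∘ dm = 0`. Let `A⁻ ⊆ V⁻`, `A ⊆ V`, `A⁺ ⊆ V⁺`
with `dm(A⁻) ⊆ A`, `dp(A) ⊆ A⁺`, and `E⁻ ⊆ V⁻`, `E ⊆ V` subspaces such that: `dm` is
injective on `E⁻`, `dp` is injective on `E`, `dm(E⁻) ⊆ A`, `dp(E) ⊆ A⁺`,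
`dm(E⁻) ∩ dm(A⁻) = 0`, `dm(A⁻) + dm(E⁻) = ker dp ∩ A`, and `dp(E) ∩ dp(A) = 0`.
Then (i) `A ∩ E = 0`, and (ii) every `u ∈ A + E` with `dp u = 0` lies in
`dm(A⁻ + E⁻) = dm(A⁻) + dm(E⁻)`. -/
theorem stmt3 {K Vm V Vp : Type*} [Field K]
    [AddCommGroup Vm] [Module K Vm] [AddCommGroup V] [Module K V]
    [AddCommGroup Vp] [Module K Vp]
    (dm : Vm →ₗ[K] V) (dp : V →ₗ[K] Vp) (hdd : dp ∘ₗ dm = 0)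
    (Am : Submodule K Vm) (A : Submodule K V) (Ap : Submodule K Vp)
    (Em : Submodule K Vm) (E : Submodule K V)
    (hAm : Am.map dm ≤ A) (hA : A.map dp ≤ Ap)
    (hinjm : ∀ x ∈ Em, dm x = 0 → x = 0)
    (hinj : ∀ x ∈ E, dp x = 0 → x = 0)
    (hEm : Em.map dm ≤ A) (hE : E.map dp ≤ Ap)
    (hdisjm : Em.map dm ⊓ Am.map dm = ⊥)
    (hcoh : Am.map dm ⊔ Em.map dm = LinearMap.ker dp ⊓ A)
    (hdisj : E.map dp ⊓ A.map dp = ⊥) :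
    A ⊓ E = ⊥ ∧
      (∀ u ∈ A ⊔ E, dp u = 0 → u ∈ (Am ⊔ Em).map dm) := by
  constructor
  · rw [Submodule.eq_bot_iff]
    rintro u ⟨huA, huE⟩
    have h0 : dp u = 0 := by
      have : dp u ∈ E.map dp ⊓ A.map dp :=
        ⟨⟨u, huE, rfl⟩, ⟨u, huA, rfl⟩⟩
      rw [hdisj] at this
      simpa using this
    exact hinj u huE h0
  · intro u hu h0
    obtain ⟨a, ha, e, he, rfl⟩ := Submodule.mem_sup.mp hu
    have hde : dp e = 0 := by
      have : dp e ∈ E.map dp ⊓ A.map dp := by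
        refine ⟨⟨e, he, rfl⟩, ⟨-a, A.neg_mem ha, ?_⟩⟩
        have : dp a + dp e = 0 := by simpa using h0
        rw [map_neg, neg_eq_iff_add_eq_zero]; exact this
      rw [hdisj] at this
      simpa using this
    have he0 : e = 0 := hinj e he hde
    subst he0
    rw [Submodule.map_sup, hcoh]
    refine ⟨?_, by simpa using ha⟩
    simpa using h0
end

section
/- Let V be a real vector space, r ≥ 0 an integer, and W₀, …, W_r subspaces of V. For c ∈ ℝ let δ_c : V ⊗ ℝ[X] → V be the linear map determined by v ⊗ p ↦ p(c)·v. For each α, let P_α = {p ∈ ℝ[X] : deg p ≤ α} and P_{α,0} = {p ∈ ℝ[X] : deg p ≤ α, p(0) = p(1) = 0}, and let W_α ⊗ P_α denote the subspace of V ⊗ ℝ[X] spanned by the elements v ⊗ p with v ∈ W_α, p ∈ P_α (similarly for W_α ⊗ P_{α,0}). Then (Σ_{α=0}^r W_α ⊗ P_α) ∩ ker δ₀ ∩ ker δ₁ = Σ_{α=0}^r W_α ⊗ P_{α,0}. -/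
open TensorProduct Polynomial

/-- Evaluation of the polynomial factor at `c`: the linear map `V ⊗ ℝ[X] → V` determined by
`v ⊗ p ↦ p(c) • v`. -/
noncomputable def evalFactor (V : Type*) [AddCommGroup V] [Module ℝ V] (c : ℝ) :
    V ⊗[ℝ] ℝ[X] →ₗ[ℝ] V :=
  (TensorProduct.rid ℝ V).toLinearMap ∘ₗ LinearMap.lTensor V (Polynomial.leval c)

/-- The projection `p ↦ p - p(0)•(1-X) - p(1)•X`. -/
noncomputable def pi0 : ℝ[X] →ₗ[ℝ] ℝ[X] :=
  LinearMap.id - (LinearMap.toSpanSingleton ℝ ℝ[X] (1 - X)) ∘ₗ Polynomial.leval 0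
    - (LinearMap.toSpanSingleton ℝ ℝ[X] X) ∘ₗ Polynomial.leval 1

lemma pi0_apply (p : ℝ[X]) :
    pi0 p = p - p.eval 0 • (1 - X) - p.eval 1 • X := by
  simp only [pi0, LinearMap.sub_apply, LinearMap.comp_apply, LinearMap.id_apply,
    LinearMap.toSpanSingleton_apply, leval_apply]

lemma pi0_eval0 (p : ℝ[X]) : (pi0 p).eval 0 = 0 := by
  simp [pi0_apply]

lemma pi0_eval1 (p : ℝ[X]) : (pi0 p).eval 1 = 0 := by
  simp [pi0_apply]

lemma pi0_mem_degreeLE (n : ℕ) (p : ℝ[X]) (hp : p ∈ degreeLE ℝ (n : WithBot ℕ)) :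
    pi0 p ∈ degreeLE ℝ (n : WithBot ℕ) := by
  rw [mem_degreeLE] at hp ⊢
  rcases Nat.eq_zero_or_pos n with hn | hn
  · subst hn
    have hc : p = C (p.coeff 0) := (Polynomial.eq_C_of_degree_le_zero (by simpa using hp))
    rw [pi0_apply, hc]
    simp only [eval_C, smul_eq_C_mul]
    ring_nf
    simp
  · have h1 : (1 : WithBot ℕ) ≤ n := by exact_mod_cast hn
    have d01 : (1 - X : ℝ[X]).degree ≤ 1 := by
      rw [show (1 - X : ℝ[X]) = -(X - C 1) by rw [C_1]; ring, degree_neg]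
      exact (degree_X_sub_C 1).le
    rw [pi0_apply]
    refine le_trans (degree_sub_le _ _) (max_le (le_trans (degree_sub_le _ _) (max_le hp ?_)) ?_)
    · exact le_trans (degree_smul_le _ _) (le_trans d01 h1)
    · exact le_trans (degree_smul_le _ _) (le_trans degree_X_le h1)

lemma evalFactor_tmul (V : Type*) [AddCommGroup V] [Module ℝ V] (c : ℝ) (v : V) (p : ℝ[X]) :
    evalFactor V c (v ⊗ₜ p) = p.eval c • v := by
  simp [evalFactor, leval_apply]

/-- Let `V` be a real vector space, `r ≥ 0`, and `W₀, …, W_r` subspaces of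
`V`.  For `c ∈ ℝ` let `δ_c : V ⊗ ℝ[X] → V` be determined by `v ⊗ p ↦ p(c)·v`.  With
`P_α = {p : deg p ≤ α}` and `P_{α,0} = {p : deg p ≤ α, p(0) = p(1) = 0}`, we have
`(Σ_α W_α ⊗ P_α) ∩ ker δ₀ ∩ ker δ₁ = Σ_α W_α ⊗ P_{α,0}`. -/
theorem stmt4 (V : Type*) [AddCommGroup V] [Module ℝ V] (r : ℕ)
    (W : Fin (r + 1) → Submodule ℝ V) :
    (⨆ α : Fin (r + 1),
        Submodule.map₂ (TensorProduct.mk ℝ V ℝ[X]) (W α)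
          (Polynomial.degreeLE ℝ ((α : ℕ) : WithBot ℕ))) ⊓
      LinearMap.ker (evalFactor V 0) ⊓ LinearMap.ker (evalFactor V 1) =
    ⨆ α : Fin (r + 1),
      Submodule.map₂ (TensorProduct.mk ℝ V ℝ[X]) (W α)
        (Polynomial.degreeLE ℝ ((α : ℕ) : WithBot ℕ) ⊓
          LinearMap.ker (Polynomial.leval (0 : ℝ)) ⊓
          LinearMap.ker (Polynomial.leval (1 : ℝ))) := by
  apply le_antisymm
  · rintro x ⟨⟨hx, h0⟩, h1⟩
    simp only [SetLike.mem_coe, LinearMap.mem_ker] at h0 h1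
    -- evaluations of the polynomial factor vanish
    have e0 : LinearMap.lTensor V (leval (0 : ℝ)) x = 0 := by
      apply (TensorProduct.rid ℝ V).injective
      simpa [evalFactor] using h0
    have e1 : LinearMap.lTensor V (leval (1 : ℝ)) x = 0 := by
      apply (TensorProduct.rid ℝ V).injective
      simpa [evalFactor] using h1
    have key : LinearMap.lTensor V pi0 x = x := by
      simp only [pi0, LinearMap.lTensor_sub, LinearMap.lTensor_comp, LinearMap.lTensor_id,
        LinearMap.sub_apply, LinearMap.id_apply, LinearMap.comp_apply, e0, e1, map_zero,
        sub_zero]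
    rw [← key]
    have hmap : ∀ α : Fin (r + 1),
        Submodule.map (LinearMap.lTensor V pi0)
          (Submodule.map₂ (TensorProduct.mk ℝ V ℝ[X]) (W α)
            (degreeLE ℝ ((α : ℕ) : WithBot ℕ))) ≤
        Submodule.map₂ (TensorProduct.mk ℝ V ℝ[X]) (W α)
          (degreeLE ℝ ((α : ℕ) : WithBot ℕ) ⊓
            LinearMap.ker (leval (0 : ℝ)) ⊓ LinearMap.ker (leval (1 : ℝ))) := by
      intro α
      rw [Submodule.map_le_iff_le_comap]
      refine Submodule.map₂_le.2 fun v hv p hp => ?_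
      simp only [Submodule.mem_comap, TensorProduct.mk_apply, LinearMap.lTensor_tmul]
      exact Submodule.apply_mem_map₂ _ hv
        ⟨⟨pi0_mem_degreeLE _ _ hp, by simp [leval_apply, pi0_eval0]⟩,
          by simp [leval_apply, pi0_eval1]⟩
    have hm : LinearMap.lTensor V pi0 x ∈
        Submodule.map (LinearMap.lTensor V pi0)
          (⨆ α : Fin (r + 1), Submodule.map₂ (TensorProduct.mk ℝ V ℝ[X]) (W α)
            (degreeLE ℝ ((α : ℕ) : WithBot ℕ))) := Submodule.mem_map_of_mem hx
    rw [Submodule.map_iSup] at hm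
    exact iSup_mono hmap hm
  · refine iSup_le fun α => le_inf (le_inf ?_ ?_) ?_
    · exact le_trans (Submodule.map₂_le_map₂_right (le_trans inf_le_left inf_le_left))
        (le_iSup_of_le α le_rfl)
    · refine Submodule.map₂_le.2 fun v hv p hp => ?_
      have h0 : p.eval 0 = 0 := by
        have := hp.1.2
        rwa [SetLike.mem_coe, LinearMap.mem_ker, leval_apply] at this
      simp [LinearMap.mem_ker, evalFactor_tmul, h0]
    · refine Submodule.map₂_le.2 fun v hv p hp => ?_
      have h1 : p.eval 1 = 0 := by
        have := hp.2
        rwa [SetLike.mem_coe, LinearMap.mem_ker, leval_apply] at this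
      simp [LinearMap.mem_ker, evalFactor_tmul, h1]
end

section
/- Let n ≥ 1 and r ≥ 0 be integers, S a subset of {1,…,n}, and u ∈ ℝ[x₁,…,x_n] a polynomial of total degree ≤ r. Then the following are equivalent: (a) for every j ∈ S, substituting x_j = 0 into u gives the zero polynomial and substituting x_j = 1 into u gives the zero polynomial; (b) there exists a polynomial v ∈ ℝ[x₁,…,x_n] of total degree ≤ r − 2·|S| such that u = v · ∏_{j∈S} x_j(1 − x_j). -/
open MvPolynomial

/-- Substitution of the single variable `x_i := c` in a multivariate polynomial (the other
variables are left untouched). -/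
noncomputable def substAt {n : ℕ} (i : Fin n) (c : ℝ) :
    MvPolynomial (Fin n) ℝ →ₐ[ℝ] MvPolynomial (Fin n) ℝ :=
  MvPolynomial.bind₁ (fun j : Fin n => if j = i then MvPolynomial.C c else MvPolynomial.X j)

lemma substAt_X_self {n : ℕ} (i : Fin n) (c : ℝ) : substAt i c (X i) = C c := by
  simp [substAt]

lemma substAt_X_ne {n : ℕ} (i j : Fin n) (c : ℝ) (h : j ≠ i) :
    substAt i c (X j) = X j := by
  simp [substAt, h]

lemma substAt_C {n : ℕ} (i : Fin n) (c a : ℝ) : substAt i c (C a) = C a := by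
  simp [substAt]

lemma dvd_sub_substAt {n : ℕ} (i : Fin n) (c : ℝ) (p : MvPolynomial (Fin n) ℝ) :
    (X i - C c) ∣ p - substAt i c p := by
  induction p using MvPolynomial.induction_on with
  | C a => simp [substAt_C]
  | add p q hp hq =>
      have := dvd_add hp hq
      simpa [map_add, add_sub_add_comm] using this
  | mul_X p j hp =>
      rw [map_mul]
      by_cases hj : j = i
      · subst hj
        rw [substAt_X_self]
        have key : p * X j - substAt j c p * C c
            = (p - substAt j c p) * X j + substAt j c p * (X j - C c) := by ring
        rw [key]
        exact dvd_add (hp.mul_right _) (dvd_mul_left _ _)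
      · rw [substAt_X_ne i j c hj]
        have key : p * X j - substAt i c p * X j = (p - substAt i c p) * X j := by ring
        rw [key]
        exact hp.mul_right _

lemma substAt_eq_zero_iff {n : ℕ} (i : Fin n) (c : ℝ) (p : MvPolynomial (Fin n) ℝ) :
    substAt i c p = 0 ↔ (X i - C c) ∣ p := by
  constructor
  · intro h
    have := dvd_sub_substAt i c p
    rwa [h, sub_zero] at this
  · rintro ⟨q, rfl⟩
    rw [map_mul, map_sub, substAt_X_self, substAt_C, sub_self, zero_mul]

lemma prod_dvd_of_subst {n : ℕ} (S : Finset (Fin n)) :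
    ∀ u : MvPolynomial (Fin n) ℝ,
      (∀ j ∈ S, substAt j (0 : ℝ) u = 0 ∧ substAt j (1 : ℝ) u = 0) →
      (∏ j ∈ S, (X j * (1 - X j))) ∣ u := by
  classical
  induction S using Finset.induction_on with
  | empty => intro u _; simp
  | @insert i S hi ih =>
      intro u h
      obtain ⟨h0, h1⟩ := h i (Finset.mem_insert_self i S)
      -- X i ∣ u
      rw [substAt_eq_zero_iff] at h0
      rw [map_zero, sub_zero] at h0
      obtain ⟨u₁, rfl⟩ := h0
      -- (X i - 1) ∣ u₁
      have h1' : (X i - C 1) ∣ u₁ := by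
        rw [map_mul, substAt_X_self] at h1
        rw [← substAt_eq_zero_iff]
        simpa [MvPolynomial.C_1] using h1
      obtain ⟨u₂, rfl⟩ := h1'
      -- remaining substitutions pass to u₂
      have hrest : ∀ j ∈ S, substAt j (0 : ℝ) u₂ = 0 ∧ substAt j (1 : ℝ) u₂ = 0 := by
        intro j hj
        have hji : j ≠ i := fun e => hi (e ▸ hj)
        have hval : ∀ c : ℝ, substAt j c (X i * ((X i - C 1) * u₂)) = 0 →
            substAt j c u₂ = 0 := by
          intro c hc
          rw [map_mul, map_mul, map_sub, substAt_X_ne j i c hji.symm,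
            substAt_C] at hc
          rcases mul_eq_zero.mp hc with h' | h'
          · exact absurd h' (X_ne_zero i)
          · rcases mul_eq_zero.mp h' with h'' | h''
            · exfalso
              have h3 := congrArg (MvPolynomial.eval (fun _ : Fin n => (0:ℝ))) h''
              simp at h3
            · exact h''
        obtain ⟨hj0, hj1⟩ := h j (Finset.mem_insert_of_mem hj)
        exact ⟨hval 0 hj0, hval 1 hj1⟩
      obtain ⟨v, hv⟩ := ih u₂ hrest
      refine ⟨-v, ?_⟩
      rw [Finset.prod_insert hi, hv]
      set P : MvPolynomial (Fin n) ℝ := ∏ j ∈ S, (X j * (1 - X j)) with hP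
      rw [MvPolynomial.C_1]
      ring

lemma totalDegree_mul_eq' {n : ℕ} {p q : MvPolynomial (Fin n) ℝ} (hp : p ≠ 0) (hq : q ≠ 0) :
    (p * q).totalDegree = p.totalDegree + q.totalDegree := by
  classical
  refine le_antisymm (totalDegree_mul p q) ?_
  set a := homogeneousComponent p.totalDegree p with ha'
  set b := homogeneousComponent q.totalDegree q with hb'
  have hdegsum : ∀ d : Fin n →₀ ℕ, d.degree = d.sum fun _ e => e := fun d => rfl
  have hane : a ≠ 0 := by
    obtain ⟨d, hd, hdeg⟩ := Finset.exists_mem_eq_sup p.support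
      ((support_nonempty).mpr hp) (fun s => s.sum fun _ e => e)
    intro h0
    have : coeff d a = coeff d p := by
      rw [ha', coeff_homogeneousComponent, if_pos]
      rw [hdegsum d, MvPolynomial.totalDegree, hdeg]
    rw [h0, coeff_zero] at this
    exact (mem_support_iff.mp hd) this.symm
  have hbne : b ≠ 0 := by
    obtain ⟨d, hd, hdeg⟩ := Finset.exists_mem_eq_sup q.support
      ((support_nonempty).mpr hq) (fun s => s.sum fun _ e => e)
    intro h0
    have : coeff d b = coeff d q := by
      rw [hb', coeff_homogeneousComponent, if_pos]
      rw [hdegsum d, MvPolynomial.totalDegree, hdeg]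
    rw [h0, coeff_zero] at this
    exact (mem_support_iff.mp hd) this.symm
  have hab : a * b ≠ 0 := mul_ne_zero hane hbne
  obtain ⟨d, hd⟩ := MvPolynomial.ne_zero_iff.mp hab
  have habhom : (a * b).IsHomogeneous (p.totalDegree + q.totalDegree) :=
    (homogeneousComponent_isHomogeneous _ p).mul (homogeneousComponent_isHomogeneous _ q)
  have hd_deg : d.degree = p.totalDegree + q.totalDegree := by
    by_contra hne
    exact hd (habhom.coeff_eq_zero hne)
  have key : coeff d (p * q) = coeff d (a * b) := by
    rw [coeff_mul, coeff_mul]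
    apply Finset.sum_congr rfl
    intro x hx
    rw [Finset.HasAntidiagonal.mem_antidiagonal] at hx
    have hsum : x.1.degree + x.2.degree = p.totalDegree + q.totalDegree := by
      rw [← hd_deg, ← hx]
      simp [Finsupp.degree_eq_weight_one, map_add]
    rw [ha', hb', coeff_homogeneousComponent, coeff_homogeneousComponent]
    by_cases h1 : x.1.degree = p.totalDegree
    · have h2 : x.2.degree = q.totalDegree := by omega
      rw [if_pos h1, if_pos h2]
    · rw [if_neg h1]
      rcases Nat.lt_or_ge p.totalDegree x.1.degree with hlt | hge
      · have : coeff x.1 p = 0 := by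
          apply coeff_eq_zero_of_totalDegree_lt
          have : x.1.degree = ∑ i ∈ x.1.support, x.1 i := rfl
          omega
        rw [this, zero_mul, zero_mul]
      · have h2 : q.totalDegree < x.2.degree := by omega
        have hq0 : coeff x.2 q = 0 := by
          apply coeff_eq_zero_of_totalDegree_lt
          have : x.2.degree = ∑ i ∈ x.2.support, x.2 i := rfl
          omega
        rw [hq0, mul_zero]
        rw [if_neg (by omega : ¬ x.2.degree = q.totalDegree), mul_zero]
  have hmem : d ∈ (p * q).support := by
    rw [mem_support_iff, key]
    exact hd
  have := MvPolynomial.le_totalDegree hmem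
  rw [← hdegsum d, hd_deg] at this
  exact this

lemma totalDegree_one_sub_X {n : ℕ} (j : Fin n) :
    ((1 : MvPolynomial (Fin n) ℝ) - X j).totalDegree = 1 := by
  refine le_antisymm ?_ ?_
  · calc ((1 : MvPolynomial (Fin n) ℝ) - X j).totalDegree
        ≤ max (1 : MvPolynomial (Fin n) ℝ).totalDegree (X j).totalDegree :=
          MvPolynomial.totalDegree_sub _ _
      _ ≤ 1 := by simp [totalDegree_one, totalDegree_X]
  · have hmem : Finsupp.single j 1 ∈ ((1 : MvPolynomial (Fin n) ℝ) - X j).support := by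
      rw [mem_support_iff, coeff_sub]
      rw [MvPolynomial.coeff_X]
      have : coeff (Finsupp.single j 1) (1 : MvPolynomial (Fin n) ℝ) = 0 := by
        rw [coeff_one, if_neg]
        exact fun h => one_ne_zero (Finsupp.single_eq_zero.mp h.symm)
      rw [this]
      norm_num
    have := MvPolynomial.le_totalDegree hmem
    simpa using this

lemma one_sub_X_ne_zero {n : ℕ} (j : Fin n) :
    (1 : MvPolynomial (Fin n) ℝ) - X j ≠ 0 := by
  intro h
  have := totalDegree_one_sub_X j
  rw [h, totalDegree_zero] at this
  exact Nat.one_ne_zero this.symm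

lemma totalDegree_prod_eq {n : ℕ} (S : Finset (Fin n)) :
    (∏ j ∈ S, (X j * (1 - X j)) : MvPolynomial (Fin n) ℝ).totalDegree = 2 * S.card ∧
    (∏ j ∈ S, (X j * (1 - X j)) : MvPolynomial (Fin n) ℝ) ≠ 0 := by
  classical
  induction S using Finset.induction_on with
  | empty => simp
  | @insert i S hi ih =>
      obtain ⟨ihdeg, ihne⟩ := ih
      have hfac_ne : (X i * (1 - X i) : MvPolynomial (Fin n) ℝ) ≠ 0 :=
        mul_ne_zero (X_ne_zero i) (one_sub_X_ne_zero i)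
      have hfac_deg : (X i * (1 - X i) : MvPolynomial (Fin n) ℝ).totalDegree = 2 := by
        rw [totalDegree_mul_eq' (X_ne_zero i) (one_sub_X_ne_zero i),
          totalDegree_X, totalDegree_one_sub_X]
      constructor
      · rw [Finset.prod_insert hi, totalDegree_mul_eq' hfac_ne ihne, hfac_deg, ihdeg,
          Finset.card_insert_of_notMem hi]
        ring
      · rw [Finset.prod_insert hi]
        exact mul_ne_zero hfac_ne ihne

/-- Let `n ≥ 1`, `r ≥ 0`, `S ⊆ {1,…,n}` and `u ∈ ℝ[x₁,…,x_n]` of total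
degree `≤ r`.  Then `u` vanishes under each substitution `x_j := 0` and `x_j := 1` (`j ∈ S`)
iff `u = v · ∏_{j∈S} x_j (1 - x_j)` for some `v` of total degree `≤ r − 2|S|`. -/
theorem stmt5 (n r : ℕ) (hn : 1 ≤ n) (S : Finset (Fin n))
    (u : MvPolynomial (Fin n) ℝ) (hu : u.totalDegree ≤ r) :
    (∀ j ∈ S, substAt j (0 : ℝ) u = 0 ∧ substAt j (1 : ℝ) u = 0) ↔
      ∃ v : MvPolynomial (Fin n) ℝ, v.totalDegree ≤ r - 2 * S.card ∧
        u = v * ∏ j ∈ S, (X j * (1 - X j)) := by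
  classical
  obtain ⟨hPdeg, hPne⟩ := totalDegree_prod_eq S
  constructor
  · intro h
    by_cases hu0 : u = 0
    · exact ⟨0, by simp [hu0]⟩
    · obtain ⟨v, hv⟩ := prod_dvd_of_subst S u h
      have hvne : v ≠ 0 := by
        intro h0
        rw [h0, mul_zero] at hv
        exact hu0 hv
      refine ⟨v, ?_, by rw [hv, mul_comm]⟩
      have hdeq : u.totalDegree
          = (∏ j ∈ S, (X j * (1 - X j)) : MvPolynomial (Fin n) ℝ).totalDegree
            + v.totalDegree := by
        rw [hv, totalDegree_mul_eq' hPne hvne]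
      rw [hPdeg] at hdeq
      omega
  · rintro ⟨v, hdeg, rfl⟩
    intro j hj
    constructor
    · rw [map_mul, map_prod]
      rw [Finset.prod_eq_zero hj (by rw [map_mul, substAt_X_self]; simp), mul_zero]
    · rw [map_mul, map_prod]
      rw [Finset.prod_eq_zero hj
        (by rw [map_mul, map_sub, substAt_X_self, map_one]; simp), mul_zero]
end

section
/- Let n ≥ 1 and r ≥ 0 be integers, and let p ∈ ℝ[x₁,…,x_n] be a polynomial of total degree ≤ r with ∫_{[0,1]ⁿ} p = 0. Then there exist polynomials q₁, …, q_n ∈ ℝ[x₁,…,x_n], each of total degree ≤ r + 1, such that for each i the polynomial q_i becomes zero upon substituting x_i = 0 and upon substituting x_i = 1, and p = Σ_{i=1}^n ∂q_i/∂x_i. -/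
open MvPolynomial MeasureTheory

namespace Stmt8Aux

variable {n : ℕ}

/-- Antiderivative in the `i`-th variable (as a linear map). -/
noncomputable def Jmap (i : Fin n) : MvPolynomial (Fin n) ℝ →ₗ[ℝ] MvPolynomial (Fin n) ℝ :=
  (MvPolynomial.basisMonomials (Fin n) ℝ).constr ℝ
    (fun a => ((a i + 1 : ℝ)⁻¹) • monomial (a + Finsupp.single i 1) 1)

lemma Jmap_monomial (i : Fin n) (a : Fin n →₀ ℕ) (c : ℝ) :
    Jmap i (monomial a c)
      = monomial (a + Finsupp.single i 1) (((a i : ℝ) + 1)⁻¹ * c) := by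
  have h : (monomial a c : MvPolynomial (Fin n) ℝ)
      = c • (MvPolynomial.basisMonomials (Fin n) ℝ) a := by
    rw [MvPolynomial.coe_basisMonomials]
    rw [smul_monomial, smul_eq_mul, mul_one]
  rw [h, LinearMap.map_smul, Jmap, Module.Basis.constr_basis, smul_smul, smul_monomial, smul_eq_mul, mul_one,
    mul_comm]

lemma substAt_monomial (i : Fin n) (c : ℝ) (b : Fin n →₀ ℕ) (d : ℝ) :
    substAt i c (monomial b d) = (C c) ^ (b i) * monomial (b.erase i) d := by
  have hmono : (monomial (b.erase i) d : MvPolynomial (Fin n) ℝ)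
      = C d * ∏ j ∈ b.support.erase i, X j ^ b j := by
    rw [monomial_eq, Finsupp.prod, Finsupp.support_erase]
    refine congrArg _ (Finset.prod_congr rfl fun j hj => ?_)
    rw [Finsupp.erase_ne (Finset.ne_of_mem_erase hj)]
  rw [substAt, bind₁_monomial, hmono]
  by_cases h : i ∈ b.support
  · rw [← Finset.mul_prod_erase _ _ h, if_pos rfl,
      Finset.prod_congr rfl (fun j hj => by rw [if_neg (Finset.ne_of_mem_erase hj)])]
    ring
  · have hb : b i = 0 := Finsupp.notMem_support_iff.mp h
    rw [Finset.erase_eq_of_notMem h,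
      Finset.prod_congr rfl (fun j hj => by rw [if_neg (by rintro rfl; exact h hj)]),
      hb, pow_zero, one_mul]

lemma erase_add_single (i : Fin n) (a : Fin n →₀ ℕ) :
    (a + Finsupp.single i 1).erase i = a.erase i := by
  ext j
  rcases eq_or_ne j i with rfl | hj
  · simp [Finsupp.erase_same]
  · simp [Finsupp.erase_ne hj, Finsupp.single_apply, hj.symm, (Ne.symm hj)]

/-- Integration of the `i`-th variable over `[0,1]`. -/
noncomputable def Imap (i : Fin n) : MvPolynomial (Fin n) ℝ →ₗ[ℝ] MvPolynomial (Fin n) ℝ :=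
  (substAt i 1).toLinearMap ∘ₗ Jmap i

lemma Imap_monomial (i : Fin n) (a : Fin n →₀ ℕ) (c : ℝ) :
    Imap i (monomial a c) = monomial (a.erase i) (((a i : ℝ) + 1)⁻¹ * c) := by
  rw [Imap, LinearMap.comp_apply, Jmap_monomial, AlgHom.toLinearMap_apply, substAt_monomial,
    map_one, one_pow, one_mul, erase_add_single]

lemma pderiv_Jmap (i : Fin n) (p : MvPolynomial (Fin n) ℝ) :
    pderiv i (Jmap i p) = p := by
  induction p using MvPolynomial.induction_on' with
  | monomial a c =>
    rw [Jmap_monomial, pderiv_monomial]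
    have h1 : (a + Finsupp.single i 1) - Finsupp.single i 1 = a := by
      ext j; simp [Finsupp.single_apply]
    have h2 : (a + Finsupp.single i 1 : Fin n →₀ ℕ) i = a i + 1 := by simp
    rw [h1, h2]
    have h3 : ((a i : ℝ) + 1) ≠ 0 := by positivity
    push_cast
    rw [mul_comm (((a i : ℝ) + 1)⁻¹) c, mul_assoc, inv_mul_cancel₀ h3, mul_one]
  | add p q hp hq => rw [map_add, map_add, hp, hq]

lemma substAt_zero_Jmap (i : Fin n) (p : MvPolynomial (Fin n) ℝ) :
    substAt i 0 (Jmap i p) = 0 := by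
  induction p using MvPolynomial.induction_on' with
  | monomial a c =>
    rw [Jmap_monomial, substAt_monomial]
    have h2 : (a + Finsupp.single i 1 : Fin n →₀ ℕ) i = a i + 1 := by simp
    rw [h2, map_zero, zero_pow (Nat.succ_ne_zero _), zero_mul]
  | add p q hp hq => rw [map_add, map_add, hp, hq, add_zero]

lemma Imap_Imap (i : Fin n) (p : MvPolynomial (Fin n) ℝ) :
    Imap i (Imap i p) = Imap i p := by
  induction p using MvPolynomial.induction_on' with
  | monomial a c =>
    rw [Imap_monomial, Imap_monomial]
    have h1 : (a.erase i) i = 0 := Finsupp.erase_same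
    have h2 : (a.erase i).erase i = a.erase i := by
      ext j
      rcases eq_or_ne j i with rfl | hj
      · simp [Finsupp.erase_same]
      · simp [Finsupp.erase_ne hj]
    rw [h1, h2]
    norm_num
  | add p q hp hq => rw [map_add, map_add, hp, hq]

lemma deg_linear (L : MvPolynomial (Fin n) ℝ →ₗ[ℝ] MvPolynomial (Fin n) ℝ) (t : ℕ)
    (h : ∀ (a : Fin n →₀ ℕ) (c : ℝ),
      (L (monomial a c)).totalDegree ≤ (a.sum fun _ m => m) + t)
    (p : MvPolynomial (Fin n) ℝ) :
    (L p).totalDegree ≤ p.totalDegree + t := by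
  conv_lhs => rw [← support_sum_monomial_coeff p]
  rw [map_sum]
  refine (totalDegree_finset_sum _ _).trans (Finset.sup_le fun a ha => ?_)
  exact (h a _).trans (add_le_add_left (le_totalDegree ha) t)

lemma deg_Jmap (i : Fin n) (p : MvPolynomial (Fin n) ℝ) :
    (Jmap i p).totalDegree ≤ p.totalDegree + 1 := by
  refine deg_linear _ 1 (fun a c => ?_) p
  rw [Jmap_monomial]
  refine (totalDegree_monomial_le _ _).trans ?_
  rw [Finsupp.sum_add_index' (fun _ => rfl) (fun _ _ _ => rfl),
    Finsupp.sum_single_index rfl]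
  exact le_rfl

lemma erase_sum_le (i : Fin n) (a : Fin n →₀ ℕ) :
    ((a.erase i).sum fun _ m => m) ≤ a.sum fun _ m => m := by
  rw [Finsupp.sum_fintype _ _ (fun _ => rfl), Finsupp.sum_fintype _ _ (fun _ => rfl)]
  refine Finset.sum_le_sum fun j _ => ?_
  rcases eq_or_ne j i with rfl | hj
  · simp [Finsupp.erase_same]
  · simp [Finsupp.erase_ne hj]

lemma deg_Imap (i : Fin n) (p : MvPolynomial (Fin n) ℝ) :
    (Imap i p).totalDegree ≤ p.totalDegree := by
  have := deg_linear (Imap i) 0 (fun a c => by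
    rw [Imap_monomial]
    exact (totalDegree_monomial_le _ _).trans
      (le_of_le_of_eq (erase_sum_le i a) (add_zero _).symm)) p
  simpa using this

/-- Composite of `Imap` over the first `k` variables. -/
noncomputable def PkL (n : ℕ) : ℕ → (MvPolynomial (Fin n) ℝ →ₗ[ℝ] MvPolynomial (Fin n) ℝ)
  | 0 => LinearMap.id
  | (k+1) => if h : k < n then (Imap ⟨k, h⟩) ∘ₗ PkL n k else PkL n k

lemma PkL_succ (i : Fin n) (p : MvPolynomial (Fin n) ℝ) :
    PkL n (i.val + 1) p = Imap i (PkL n i.val p) := by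
  rcases i with ⟨k, hk⟩
  rw [PkL, dif_pos hk]
  rfl

lemma deg_PkL (k : ℕ) (p : MvPolynomial (Fin n) ℝ) :
    (PkL n k p).totalDegree ≤ p.totalDegree := by
  induction k with
  | zero => exact le_rfl
  | succ k ih =>
    rw [PkL]
    by_cases h : k < n
    · rw [dif_pos h, LinearMap.comp_apply]
      exact (deg_Imap _ _).trans ih
    · rw [dif_neg h]; exact ih

/-- The exponent function zeroed out below `k`. -/
noncomputable def zb (k : ℕ) (a : Fin n →₀ ℕ) : Fin n →₀ ℕ :=
  Finsupp.equivFunOnFinite.symm (fun j => if j.val < k then 0 else a j)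

lemma zb_apply (k : ℕ) (a : Fin n →₀ ℕ) (j : Fin n) :
    zb k a j = if j.val < k then 0 else a j := rfl

lemma zb_zero (a : Fin n →₀ ℕ) : zb 0 a = a := by
  ext j; simp [zb_apply]

lemma zb_succ (k : ℕ) (h : k < n) (a : Fin n →₀ ℕ) :
    (zb k a).erase ⟨k, h⟩ = zb (k+1) a := by
  ext j
  rcases eq_or_ne j ⟨k, h⟩ with rfl | hj
  · simp [Finsupp.erase_same, zb_apply]
  · have hv : j.val ≠ k := fun e => hj (Fin.ext e)
    rw [Finsupp.erase_ne hj, zb_apply, zb_apply]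
    by_cases h2 : j.val < k
    · simp [h2, show j.val < k+1 by omega]
    · simp [h2, show ¬ j.val < k+1 by omega]

lemma zb_apply_self (k : ℕ) (h : k < n) (a : Fin n →₀ ℕ) :
    zb k a ⟨k, h⟩ = a ⟨k, h⟩ := by simp [zb_apply]

lemma PkL_monomial (a : Fin n →₀ ℕ) (c : ℝ) (k : ℕ) :
    PkL n k (monomial a c)
      = monomial (zb k a)
          ((∏ j ∈ Finset.univ.filter (fun j : Fin n => j.val < k), ((a j : ℝ) + 1)⁻¹) * c) := by
  induction k with
  | zero =>
    rw [zb_zero]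
    have : Finset.univ.filter (fun j : Fin n => j.val < 0) = ∅ := by
      ext j; simp
    rw [this, Finset.prod_empty, one_mul]
    rfl
  | succ k ih =>
    rw [PkL]
    by_cases h : k < n
    · rw [dif_pos h, LinearMap.comp_apply, ih, Imap_monomial, zb_succ k h, zb_apply_self]
      congr 1
      have hins : Finset.univ.filter (fun j : Fin n => j.val < k + 1)
          = insert ⟨k, h⟩ (Finset.univ.filter (fun j : Fin n => j.val < k)) := by
        ext j
        simp only [Finset.mem_filter, Finset.mem_univ, true_and, Finset.mem_insert, Fin.ext_iff]
        omega
      rw [hins, Finset.prod_insert (by simp)]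
      ring
    · rw [dif_neg h, ih]
      have hn : n ≤ k := Nat.le_of_not_lt h
      have h1 : zb (k+1) a = zb k a := by
        ext j
        rw [zb_apply, zb_apply]
        have := j.isLt
        simp [show j.val < k by omega, show j.val < k + 1 by omega]
      have h2 : Finset.univ.filter (fun j : Fin n => j.val < k + 1)
          = Finset.univ.filter (fun j : Fin n => j.val < k) := by
        ext j
        have := j.isLt
        simp only [Finset.mem_filter, Finset.mem_univ, true_and]
        omega
      rw [h1, h2]

lemma PkL_n (p : MvPolynomial (Fin n) ℝ) :
    PkL n n p = C (∑ a ∈ p.support, (∏ j, ((a j : ℝ) + 1)⁻¹) * coeff a p) := by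
  conv_lhs => rw [← support_sum_monomial_coeff p]
  rw [map_sum, map_sum]
  refine Finset.sum_congr rfl fun a _ => ?_
  rw [PkL_monomial]
  have h1 : zb n a = (0 : Fin n →₀ ℕ) := by
    ext j; simp [zb_apply, j.isLt]
  have h2 : Finset.univ.filter (fun j : Fin n => j.val < n) = Finset.univ := by
    ext j; simp [j.isLt]
  rw [h1, h2, C_apply]

lemma cube_integral (p : MvPolynomial (Fin n) ℝ) :
    ∫ x in Set.Icc (0 : Fin n → ℝ) 1, MvPolynomial.eval x p
      = ∑ a ∈ p.support, (∏ j, ((a j : ℝ) + 1)⁻¹) * coeff a p := by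
  have heval : ∀ x : Fin n → ℝ,
      MvPolynomial.eval x p = ∑ a ∈ p.support, coeff a p * ∏ i, x i ^ a i :=
    fun x => eval_eq' x p
  simp_rw [heval]
  rw [integral_finset_sum]
  · refine Finset.sum_congr rfl fun a _ => ?_
    rw [MeasureTheory.integral_const_mul, mul_comm]
    congr 1
    -- ∫ over the box of a product of powers
    have hbox : ∀ x : Fin n → ℝ,
        (Set.Icc (0 : Fin n → ℝ) 1).indicator (fun x => ∏ i, x i ^ a i) x
          = ∏ i, (Set.Icc (0 : ℝ) 1).indicator (fun t => t ^ a i) (x i) := by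
      intro x
      by_cases hx : x ∈ Set.Icc (0 : Fin n → ℝ) 1
      · rw [Set.indicator_of_mem hx]
        have hxi : ∀ i, x i ∈ Set.Icc (0 : ℝ) 1 := fun i => ⟨hx.1 i, hx.2 i⟩
        exact Finset.prod_congr rfl fun i _ => (Set.indicator_of_mem (hxi i) _).symm
      · rw [Set.indicator_of_notMem hx]
        rw [← Set.pi_univ_Icc, Set.mem_univ_pi] at hx
        push_neg at hx
        obtain ⟨i, hi⟩ := hx
        exact (Finset.prod_eq_zero (Finset.mem_univ i)
          (Set.indicator_of_notMem hi _)).symm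
    rw [← integral_indicator measurableSet_Icc]
    simp_rw [hbox]
    rw [MeasureTheory.volume_pi, MeasureTheory.integral_fintype_prod_eq_prod (ι := Fin n)
      (fun i t => (Set.Icc (0 : ℝ) 1).indicator (fun s => s ^ a i) t)]
    refine Finset.prod_congr rfl fun i _ => ?_
    rw [integral_indicator measurableSet_Icc, integral_Icc_eq_integral_Ioc,
      ← intervalIntegral.integral_of_le zero_le_one, integral_pow, one_pow,
      zero_pow (Nat.succ_ne_zero _), sub_zero, one_div]
  · intro a _
    apply Continuous.integrableOn_Icc
    continuity

end Stmt8Aux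

open Stmt8Aux in
/-- Let `n ≥ 1`, `r ≥ 0` and `p ∈ ℝ[x₁,…,x_n]` of total degree `≤ r` with
`∫_{[0,1]ⁿ} p = 0`. Then there are `q₁, …, q_n` of total degree `≤ r + 1`, each `q_i`
vanishing under the substitutions `x_i := 0` and `x_i := 1`, with `p = Σ_i ∂q_i/∂x_i`. -/
theorem stmt8 (n r : ℕ) (hn : 1 ≤ n) (p : MvPolynomial (Fin n) ℝ)
    (hdeg : p.totalDegree ≤ r)
    (hint : ∫ x in Set.Icc (0 : Fin n → ℝ) 1, MvPolynomial.eval x p = 0) :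
    ∃ q : Fin n → MvPolynomial (Fin n) ℝ,
      (∀ i, (q i).totalDegree ≤ r + 1) ∧
      (∀ i, substAt i (0 : ℝ) (q i) = 0 ∧ substAt i (1 : ℝ) (q i) = 0) ∧
      p = ∑ i, MvPolynomial.pderiv i (q i) := by
  have hPn : PkL n n p = 0 := by
    rw [PkL_n, ← cube_integral, hint, map_zero]
  refine ⟨fun i => Jmap i (PkL n i.val p - PkL n (i.val + 1) p), ?_, ?_, ?_⟩
  · intro i
    refine (deg_Jmap _ _).trans (add_le_add_left ?_ 1)
    refine (totalDegree_sub _ _).trans (max_le ?_ ?_) <;>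
      exact (deg_PkL _ _).trans hdeg
  · intro i
    constructor
    · exact substAt_zero_Jmap _ _
    · have h1 : substAt i (1 : ℝ) (Jmap i (PkL n i.val p - PkL n (i.val + 1) p))
          = Imap i (PkL n i.val p - PkL n (i.val + 1) p) := rfl
      rw [h1, map_sub, ← PkL_succ, PkL_succ i p, Imap_Imap, ← PkL_succ, sub_self]
  · have hterm : ∀ i : Fin n,
        MvPolynomial.pderiv i (Jmap i (PkL n i.val p - PkL n (i.val + 1) p))
          = PkL n i.val p - PkL n (i.val + 1) p := fun i => pderiv_Jmap i _
    simp_rw [hterm]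
    rw [Fin.sum_univ_eq_sum_range (fun m => PkL n m p - PkL n (m + 1) p) n,
      Finset.sum_range_sub' (fun m => PkL n m p), hPn, sub_zero]
    rfl
end

section
/- Let n ≥ 1, 1 ≤ k ≤ n and t ≥ 1 be integers. Then, as integers, Σ_{i=0}^{k−1} (−1)^i · C(t + k − 1 − i + n − 1, n − 1) · C(n, n − k + 1 + i) = C(n + t + k − 1, k − 1) · C(t + n − 1, n − k), where C denotes the binomial coefficient. -/
open Nat

lemma stmt16_key (a m s : ℕ) :
    (2*a+m+s+4).choose (a+1) * (a+m+s+2).choose m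
      + (2*a+m+s+3).choose a * (a+m+s+2).choose (m+1)
    = (2*a+m+s+3).choose (a+m+1) * (a+m+2).choose (m+1) := by
  have h : ((2*a+m+s+4).choose (a+1) * (a+m+s+2).choose m
      + (2*a+m+s+3).choose a * (a+m+s+2).choose (m+1) : ℚ)
    = ((2*a+m+s+3).choose (a+m+1) * (a+m+2).choose (m+1) : ℚ) := by
    rw [Nat.cast_choose ℚ (by omega : a+1 ≤ 2*a+m+s+4),
        Nat.cast_choose ℚ (by omega : m ≤ a+m+s+2),
        Nat.cast_choose ℚ (by omega : a ≤ 2*a+m+s+3),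
        Nat.cast_choose ℚ (by omega : m+1 ≤ a+m+s+2),
        Nat.cast_choose ℚ (by omega : a+m+1 ≤ 2*a+m+s+3),
        Nat.cast_choose ℚ (by omega : m+1 ≤ a+m+2),
        show 2*a+m+s+4 - (a+1) = a+m+s+3 by omega,
        show a+m+s+2 - m = a+s+2 by omega,
        show 2*a+m+s+3 - a = a+m+s+3 by omega,
        show a+m+s+2 - (m+1) = a+s+1 by omega,
        show 2*a+m+s+3 - (a+m+1) = a+s+2 by omega,
        show a+m+2 - (m+1) = a+1 by omega,
        show (2*a+m+s+4)! = (2*a+m+s+4) * (2*a+m+s+3)! by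
          rw [show 2*a+m+s+4 = (2*a+m+s+3)+1 by ring]; exact Nat.factorial_succ _,
        show (a+m+s+3)! = (a+m+s+3) * (a+m+s+2)! by
          rw [show a+m+s+3 = (a+m+s+2)+1 by ring]; exact Nat.factorial_succ _,
        show (a+s+2)! = (a+s+2) * (a+s+1)! by
          rw [show a+s+2 = (a+s+1)+1 by ring]; exact Nat.factorial_succ _,
        show (m+1)! = (m+1) * Nat.factorial m by exact Nat.factorial_succ _,
        show (a+1)! = (a+1) * Nat.factorial a by exact Nat.factorial_succ _,
        show (a+m+2)! = (a+m+2) * (a+m+1)! by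
          rw [show a+m+2 = (a+m+1)+1 by ring]; exact Nat.factorial_succ _]
    push_cast
    have h1 : ((2*a+m+s+3)! : ℚ) ≠ 0 := by positivity
    have h2 : ((a+m+s+2)! : ℚ) ≠ 0 := by positivity
    have h3 : ((a+s+1)! : ℚ) ≠ 0 := by positivity
    have h4 : ((a+m+1)! : ℚ) ≠ 0 := by positivity
    have h5 : ((Nat.factorial m) : ℚ) ≠ 0 := by positivity
    have h6 : ((Nat.factorial a) : ℚ) ≠ 0 := by positivity
    field_simp
    ring
  exact_mod_cast h

lemma stmt16_main (a : ℕ) : ∀ m s : ℕ,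
    ∑ i ∈ Finset.range (a+1),
        (-1 : ℤ) ^ i * ((2*a+m+s+1 - i).choose (a+m) : ℤ) * ((a+m+1).choose (m+1+i) : ℤ)
      = ((2*a+m+s+2).choose a : ℤ) * ((a+m+s+1).choose m : ℤ) := by
  induction a with
  | zero =>
      intro m s
      simp [Nat.choose_succ_self_right]
  | succ a ih =>
      intro m s
      rw [Finset.sum_range_succ']
      have hshift : ∀ i ∈ Finset.range (a+1),
          (-1 : ℤ) ^ (i+1) * ((2*(a+1)+m+s+1 - (i+1)).choose (a+1+m) : ℤ)
              * ((a+1+m+1).choose (m+1+(i+1)) : ℤ)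
          = -((-1 : ℤ) ^ i * ((2*a+(m+1)+s+1 - i).choose (a+(m+1)) : ℤ)
              * ((a+(m+1)+1).choose ((m+1)+1+i) : ℤ)) := by
        intro i hi
        rw [show 2*(a+1)+m+s+1 - (i+1) = 2*a+(m+1)+s+1 - i by omega,
            show a+1+m = a+(m+1) by omega,
            show m+1+(i+1) = (m+1)+1+i by omega, pow_succ]
        ring
      rw [Finset.sum_congr rfl hshift, Finset.sum_neg_distrib, ih (m+1) s]
      have hc : ((2*a+m+s+3).choose (a+m+1) * (a+m+2).choose (m+1) : ℤ)
          = ((2*a+m+s+4).choose (a+1) * (a+m+s+2).choose m : ℤ)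
            + ((2*a+m+s+3).choose a * (a+m+s+2).choose (m+1) : ℤ) := by
        exact_mod_cast (stmt16_key a m s).symm
      simp only [pow_zero, one_mul, Nat.add_zero, Nat.sub_zero]
      rw [show 2*a+(m+1)+s+2 = 2*a+m+s+3 by omega,
          show a+(m+1)+s+1 = a+m+s+2 by omega,
          show 2*(a+1)+m+s+1 = 2*a+m+s+3 by omega,
          show 2*(a+1)+m+s+2 = 2*a+m+s+4 by omega,
          show a+1+m = a+m+1 by omega,
          show a+m+1+1 = a+m+2 by omega,
          show a+m+1+s+1 = a+m+s+2 by omega]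
      linarith [hc]

/-- For `n ≥ 1`, `1 ≤ k ≤ n`, `t ≥ 1`:
`Σ_{i=0}^{k−1} (−1)^i C(t+k−1−i+n−1, n−1) C(n, n−k+1+i)
  = C(n+t+k−1, k−1) · C(t+n−1, n−k)` (as integers). -/
theorem stmt16 (n k t : ℕ) (hn : 1 ≤ n) (hk1 : 1 ≤ k) (hk2 : k ≤ n) (ht : 1 ≤ t) :
    ∑ i ∈ Finset.range k,
        (-1 : ℤ) ^ i * (Nat.choose (t + k - 1 - i + n - 1) (n - 1) : ℤ) *
          (Nat.choose n (n - k + 1 + i) : ℤ) =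
      (Nat.choose (n + t + k - 1) (k - 1) : ℤ) * (Nat.choose (t + n - 1) (n - k) : ℤ) := by
  obtain ⟨a, rfl⟩ : ∃ a, k = a+1 := ⟨k-1, by omega⟩
  obtain ⟨m, rfl⟩ : ∃ m, n = a+1+m := ⟨n-(a+1), by omega⟩
  obtain ⟨s, rfl⟩ : ∃ s, t = s+1 := ⟨t-1, by omega⟩
  have hterm : ∀ i ∈ Finset.range (a+1),
      (-1 : ℤ) ^ i * (Nat.choose (s+1 + (a+1) - 1 - i + (a+1+m) - 1) (a+1+m - 1) : ℤ) *
          (Nat.choose (a+1+m) (a+1+m - (a+1) + 1 + i) : ℤ)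
      = (-1 : ℤ) ^ i * ((2*a+m+s+1 - i).choose (a+m) : ℤ) * ((a+m+1).choose (m+1+i) : ℤ) := by
    intro i hi
    simp only [Finset.mem_range] at hi
    rw [show s+1 + (a+1) - 1 - i + (a+1+m) - 1 = 2*a+m+s+1 - i by omega,
        show a+1+m - 1 = a+m by omega,
        show a+1+m - (a+1) + 1 + i = m+1+i by omega,
        show a+1+m = a+m+1 by omega]
  rw [Finset.sum_congr rfl hterm, stmt16_main a m s,
      show a+1+m + (s+1) + (a+1) - 1 = 2*a+m+s+2 by omega,
      show a+1 - 1 = a by omega,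
      show s+1 + (a+1+m) - 1 = a+m+s+1 by omega,
      show a+1+m - (a+1) = m by omega]
end
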